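/- Let G be a set of formal concepts of E(I) with E(I) = A_G ∘ B_G. Then every set F of formal concepts of I that contains, for each ⟨C,D⟩ ∈ G, at least one concept from the interval I_{C,D} = [γ_I(C), μ_I(D)] of B(I), satisfies I = A_F ∘ B_F. -/

import Mathlib

/-- `C↑`: attributes shared by all objects in `C`. -/
def up {n m : ℕ} (I : Fin n → Fin m → Bool) (C : Finset (Fin n)) : Finset (Fin m) :=
  Finset.univ.filter fun j => ∀ i ∈ C, I i j = true

/-- `D↓`: objects sharing all attributes in `D`. -/
def dn {n m : ℕ} (I : Fin n → Fin m → Bool) (D : Finset (Fin m)) : Finset (Fin n) :=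
  Finset.univ.filter fun i => ∀ j ∈ D, I i j = true

/-- A formal concept of `I`: a pair `⟨C,D⟩` with `C↑ = D` and `D↓ = C`. -/
def isConcept {n m : ℕ} (I : Fin n → Fin m → Bool)
    (p : Finset (Fin n) × Finset (Fin m)) : Prop :=
  up I p.1 = p.2 ∧ dn I p.2 = p.1

/-- The interval `[γ(C), μ(D)]` in the concept lattice of `I`
(concepts ordered by extent inclusion). -/
def interval {n m : ℕ} (I : Fin n → Fin m → Bool)
    (C : Finset (Fin n)) (D : Finset (Fin m)) :
    Set (Finset (Fin n) × Finset (Fin m)) :=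
  {p | isConcept I p ∧ dn I (up I C) ⊆ p.1 ∧ p.1 ⊆ dn I D}

/-- The Boolean matrix `A_F ∘ B_F` determined by a set `F` of concepts:
entry `(i,j)` is 1 iff some concept in `F` covers `(i,j)`. -/
def cov {n m : ℕ} (F : Finset (Finset (Fin n) × Finset (Fin m))) :
    Fin n → Fin m → Bool :=
  fun i j => decide (∃ p ∈ F, i ∈ p.1 ∧ j ∈ p.2)

/-- The essential part `E(I)`: entry `(i,j)` is 1 iff the interval `I_{ij}` is
non-empty and inclusion-minimal among the non-empty intervals `I_{i'j'}`. -/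
noncomputable def Ess {n m : ℕ} (I : Fin n → Fin m → Bool) : Fin n → Fin m → Bool :=
  fun i j =>
    @decide ((interval I {i} {j}).Nonempty ∧
      ∀ (i' : Fin n) (j' : Fin m), (interval I {i'} {j'}).Nonempty →
        interval I {i'} {j'} ⊆ interval I {i} {j} →
        interval I {i'} {j'} = interval I {i} {j})
      (Classical.propDecidable _)

/-!
If `I i j = 1`, the interval `I_{ij}` is non-empty, and among the finitely many non-empty
intervals `I_{ab}` contained in it there is an inclusion-minimal one, so `E(I)_{ab} = 1`.
Then some `⟨C,D⟩ ∈ G` covers `(a,b)`, and the concept that `F` picks from `I_{C,D}` lies in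
`I_{C,D} ⊆ I_{ab} ⊆ I_{ij}`; every concept of `I_{ij}` covers `(i,j)`. Conversely, concepts
of `I` only cover entries equal to 1.
-/

section ConceptLattice

variable {n m : ℕ} (I : Fin n → Fin m → Bool)

lemma mem_up {C : Finset (Fin n)} {j : Fin m} : j ∈ up I C ↔ ∀ i ∈ C, I i j = true := by
  simp [up]

lemma mem_dn {D : Finset (Fin m)} {i : Fin n} : i ∈ dn I D ↔ ∀ j ∈ D, I i j = true := by
  simp [dn]

lemma up_anti {A B : Finset (Fin n)} (h : A ⊆ B) : up I B ⊆ up I A := fun _ hj =>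
  (mem_up I).2 fun i hi => (mem_up I).1 hj i (h hi)

lemma dn_anti {A B : Finset (Fin m)} (h : A ⊆ B) : dn I B ⊆ dn I A := fun _ hi =>
  (mem_dn I).2 fun j hj => (mem_dn I).1 hi j (h hj)

lemma subset_dn_up (C : Finset (Fin n)) : C ⊆ dn I (up I C) := fun i hi =>
  (mem_dn I).2 fun _ hj => (mem_up I).1 hj i hi

lemma subset_up_dn (D : Finset (Fin m)) : D ⊆ up I (dn I D) := fun j hj =>
  (mem_up I).2 fun _ hi => (mem_dn I).1 hi j hj

lemma up_dn_up (C : Finset (Fin n)) : up I (dn I (up I C)) = up I C :=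
  (up_anti I (subset_dn_up I C)).antisymm (subset_up_dn I (up I C))

lemma cov_eq_true_iff {F : Finset (Finset (Fin n) × Finset (Fin m))} {i : Fin n} {j : Fin m} :
    cov F i j = true ↔ ∃ p ∈ F, i ∈ p.1 ∧ j ∈ p.2 := by
  simp [cov]

lemma isConcept.apply_eq_true {I : Fin n → Fin m → Bool} {p : Finset (Fin n) × Finset (Fin m)}
    (hp : isConcept I p) {i : Fin n} {j : Fin m} (hi : i ∈ p.1) (hj : j ∈ p.2) :
    I i j = true :=
  (mem_up I).1 (hp.1 ▸ hj) i hi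

lemma interval_singleton_nonempty {i : Fin n} {j : Fin m} (h : I i j = true) :
    (interval I {i} {j}).Nonempty := by
  refine ⟨(dn I (up I {i}), up I (dn I (up I {i}))), ⟨rfl, by rw [up_dn_up]⟩, subset_rfl,
    ?_⟩
  refine dn_anti I (Finset.singleton_subset_iff.2 ((mem_up I).2 fun i' hi' => ?_))
  rwa [Finset.mem_singleton.1 hi']

lemma interval_subset_interval_singleton {C : Finset (Fin n)} {D : Finset (Fin m)}
    {i : Fin n} {j : Fin m} (hi : i ∈ C) (hj : j ∈ D) :
    interval I C D ⊆ interval I {i} {j} := fun _ ⟨hp, hC, hD⟩ =>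
  ⟨hp, (dn_anti I (up_anti I (Finset.singleton_subset_iff.2 hi))).trans hC,
    hD.trans (dn_anti I (Finset.singleton_subset_iff.2 hj))⟩

lemma mem_of_mem_interval_singleton {i : Fin n} {j : Fin m}
    {q : Finset (Fin n) × Finset (Fin m)} (hq : q ∈ interval I {i} {j}) :
    i ∈ q.1 ∧ j ∈ q.2 := by
  obtain ⟨⟨hup, -⟩, hi, hj⟩ := hq
  refine ⟨hi (subset_dn_up I {i} (Finset.mem_singleton_self i)), ?_⟩
  rw [← hup, mem_up]
  exact fun x hx => (mem_dn I).1 (hj hx) j (Finset.mem_singleton_self j)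

lemma ess_eq_true_iff {i : Fin n} {j : Fin m} :
    Ess I i j = true ↔ (interval I {i} {j}).Nonempty ∧
      ∀ (i' : Fin n) (j' : Fin m), (interval I {i'} {j'}).Nonempty →
        interval I {i'} {j'} ⊆ interval I {i} {j} →
        interval I {i'} {j'} = interval I {i} {j} := by
  simp only [Ess, decide_eq_true_iff]

lemma exists_ess_interval_subset {i : Fin n} {j : Fin m} (h : I i j = true) :
    ∃ a b, Ess I a b = true ∧ interval I {a} {b} ⊆ interval I {i} {j} := by
  let below : Set (Set (Finset (Fin n) × Finset (Fin m))) :=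
    {S | S.Nonempty ∧ S ⊆ interval I {i} {j}} ∩
      Set.range fun ab : Fin n × Fin m => interval I {ab.1} {ab.2}
  have hfin : below.Finite := (Set.finite_range _).inter_of_right _
  obtain ⟨S, ⟨⟨hne, hsub⟩, ⟨a, b⟩, rfl⟩, hmin⟩ :=
    hfin.exists_minimal ⟨_, ⟨interval_singleton_nonempty I h, subset_rfl⟩, (i, j), rfl⟩
  refine ⟨a, b, (ess_eq_true_iff I).2 ⟨hne, fun i' j' hne' hsub' => ?_⟩, hsub⟩
  exact hsub'.antisymm (hmin ⟨⟨hne', hsub'.trans hsub⟩, (i', j'), rfl⟩ hsub')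

end ConceptLattice

theorem factorization_from_ess_factorization_general {n m : ℕ} (I : Fin n → Fin m → Bool)
    (G : Finset (Finset (Fin n) × Finset (Fin m)))
    (hGfact : ∀ i j, Ess I i j = cov G i j)
    (F : Finset (Finset (Fin n) × Finset (Fin m)))
    (hF : ∀ p ∈ F, isConcept I p)
    (hpick : ∀ p ∈ G, ∃ q ∈ F, q ∈ interval I p.1 p.2) :
    ∀ i j, I i j = cov F i j := by
  intro i j
  refine Bool.eq_iff_iff.2 ⟨fun hij => ?_, fun hcov => ?_⟩
  · obtain ⟨a, b, hess, hsub⟩ := exists_ess_interval_subset I hij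
    obtain ⟨p, hpG, ha, hb⟩ := cov_eq_true_iff.1 (hGfact a b ▸ hess)
    obtain ⟨q, hqF, hq⟩ := hpick p hpG
    have hqij : q ∈ interval I {i} {j} := hsub (interval_subset_interval_singleton I ha hb hq)
    exact cov_eq_true_iff.2 ⟨q, hqF, mem_of_mem_interval_singleton I hqij⟩
  · obtain ⟨q, hqF, hi, hj⟩ := cov_eq_true_iff.1 hcov
    exact (hF q hqF).apply_eq_true hi hj

theorem factorization_from_ess_factorization {n m : ℕ} (I : Fin n → Fin m → Bool)
    (G : Finset (Finset (Fin n) × Finset (Fin m)))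
    (hG : ∀ p ∈ G, isConcept (Ess I) p)
    (hGfact : ∀ i j, Ess I i j = cov G i j)
    (F : Finset (Finset (Fin n) × Finset (Fin m)))
    (hF : ∀ p ∈ F, isConcept I p)
    (hpick : ∀ p ∈ G, ∃ q ∈ F, q ∈ interval I p.1 p.2) :
    ∀ i j, I i j = cov F i j :=
  factorization_from_ess_factorization_general I G hGfact F hF hpick
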